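/- (Data processing inequality for L-conditional entropy.) Let X, Y, Z be jointly distributed random variables on finite sets such that Y ↔ X ↔ Z is a Markov chain, i.e., P_{Y|X=x,Z=z} = P_{Y|X=x} for every (x,z) with P_{X,Z}(x,z) > 0. Then H_L(Y|X) ≤ H_L(Y|Z). -/
import Mathlib


open Finset

open Classical in
/-- Probability of an event under a pmf `p` on a finite sample space. -/
noncomputable def pr {Ω : Type*} [Fintype Ω] (p : Ω → ℝ) (E : Ω → Prop) : ℝ :=
  ∑ ω, if E ω then p ω else 0

/-- Conditional distribution of a random variable `Y` given an event `E`. -/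
noncomputable def condDist {Ω 𝒴 : Type*} [Fintype Ω] (p : Ω → ℝ) (Y : Ω → 𝒴)
    (E : Ω → Prop) : 𝒴 → ℝ :=
  fun y => pr p (fun ω => Y ω = y ∧ E ω) / pr p E

/-- Expected loss `E_{Y∼P}[L(Y,a)]`. -/
noncomputable def expLoss {𝒴 𝒜 : Type*} [Fintype 𝒴] (L : 𝒴 → 𝒜 → ℝ) (P : 𝒴 → ℝ)
    (a : 𝒜) : ℝ :=
  ∑ y, P y * L y a

/-- The `L`-entropy `H_L(P) = min_{a∈𝒜} E_{Y∼P}[L(Y,a)]`. -/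
noncomputable def Lentropy {𝒴 𝒜 : Type*} [Fintype 𝒴] (L : 𝒴 → 𝒜 → ℝ) (P : 𝒴 → ℝ) : ℝ :=
  ⨅ a : 𝒜, expLoss L P a

lemma pr_nonneg {Ω : Type*} [Fintype Ω] {p : Ω → ℝ} (hp : ∀ ω, 0 ≤ p ω) (E : Ω → Prop) :
    0 ≤ pr p E := by
  classical
  refine Finset.sum_nonneg fun ω _ => ?_
  split <;> simp [hp ω]

lemma pr_mono {Ω : Type*} [Fintype Ω] {p : Ω → ℝ} (hp : ∀ ω, 0 ≤ p ω) {E F : Ω → Prop}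
    (h : ∀ ω, E ω → F ω) : pr p E ≤ pr p F := by
  classical
  refine Finset.sum_le_sum fun ω _ => ?_
  by_cases hE : E ω
  · simp [hE, h ω hE]
  · simp only [hE, if_false]
    split <;> simp [hp ω]

lemma pr_congr {Ω : Type*} [Fintype Ω] (p : Ω → ℝ) {E F : Ω → Prop}
    (h : ∀ ω, E ω ↔ F ω) : pr p E = pr p F := by
  have hEF : E = F := funext fun ω => propext (h ω)
  rw [hEF]

lemma pr_fiber {Ω 𝒳 : Type*} [Fintype Ω] [Fintype 𝒳] (p : Ω → ℝ) (X : Ω → 𝒳)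
    (E : Ω → Prop) : pr p E = ∑ x, pr p (fun ω => X ω = x ∧ E ω) := by
  classical
  unfold pr
  rw [Finset.sum_comm]
  refine Finset.sum_congr rfl fun ω _ => ?_
  by_cases hE : E ω
  · simp [hE]
  · simp [hE]

lemma expLoss_le_bddBelow {𝒴 𝒜 : Type*} [Fintype 𝒴] [Fintype 𝒜] (L : 𝒴 → 𝒜 → ℝ)
    (P : 𝒴 → ℝ) : BddBelow (Set.range (expLoss L P)) :=
  (Set.finite_range _).bddBelow

lemma Lentropy_le {𝒴 𝒜 : Type*} [Fintype 𝒴] [Fintype 𝒜] (L : 𝒴 → 𝒜 → ℝ)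
    (P : 𝒴 → ℝ) (a : 𝒜) : Lentropy L P ≤ expLoss L P a :=
  ciInf_le (expLoss_le_bddBelow L P) a

lemma lentropy_mix {𝒳 𝒴 𝒜 : Type*} [Fintype 𝒳] [Fintype 𝒴] [Fintype 𝒜] [Nonempty 𝒜]
    (L : 𝒴 → 𝒜 → ℝ) (w : 𝒳 → ℝ) (hw : ∀ x, 0 ≤ w x) (P : 𝒳 → 𝒴 → ℝ) :
    ∑ x, w x * Lentropy L (P x) ≤ Lentropy L (fun y => ∑ x, w x * P x y) := by
  refine le_ciInf fun a => ?_
  have hlin : expLoss L (fun y => ∑ x, w x * P x y) a = ∑ x, w x * expLoss L (P x) a := by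
    unfold expLoss
    simp only [Finset.sum_mul, Finset.mul_sum, mul_assoc]
    rw [Finset.sum_comm]
  rw [hlin]
  exact Finset.sum_le_sum fun x _ =>
    mul_le_mul_of_nonneg_left (Lentropy_le L (P x) a) (hw x)

/-- The `L`-conditional entropy `H_L(Y|X) = Σ_x P_X(x) H_L(P_{Y|X=x})`. -/
noncomputable def LcondEntropy {Ω 𝒳 𝒴 𝒜 : Type*} [Fintype Ω] [Fintype 𝒳] [Fintype 𝒴]
    (L : 𝒴 → 𝒜 → ℝ) (p : Ω → ℝ) (Y : Ω → 𝒴) (X : Ω → 𝒳) : ℝ :=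
  ∑ x, pr p (fun ω => X ω = x) * Lentropy L (condDist p Y (fun ω => X ω = x))

/-- data processing inequality for `L`-conditional entropy.
If `Y ↔ X ↔ Z` is a Markov chain, then `H_L(Y|X) ≤ H_L(Y|Z)`. -/
theorem data_processing_inequality {Ω 𝒳 𝒴 𝒵 𝒜 : Type*} [Fintype Ω] [Fintype 𝒳]
    [Fintype 𝒴] [Fintype 𝒵] [Fintype 𝒜] [Nonempty 𝒜]
    (L : 𝒴 → 𝒜 → ℝ)
    (p : Ω → ℝ) (hp : ∀ ω, 0 ≤ p ω) (hsum : ∑ ω, p ω = 1)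
    (X : Ω → 𝒳) (Y : Ω → 𝒴) (Z : Ω → 𝒵)
    (hMarkov : ∀ x z, 0 < pr p (fun ω => X ω = x ∧ Z ω = z) →
      condDist p Y (fun ω => X ω = x ∧ Z ω = z) = condDist p Y (fun ω => X ω = x)) :
    LcondEntropy L p Y X ≤ LcondEntropy L p Y Z := by
  classical
  unfold LcondEntropy
  set H : 𝒳 → ℝ := fun x => Lentropy L (condDist p Y (fun ω => X ω = x)) with hH
  set J : 𝒳 → 𝒵 → ℝ := fun x z => pr p (fun ω => X ω = x ∧ Z ω = z) with hJ
  have key : ∀ z : 𝒵,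
      ∑ x, J x z * H x
        ≤ pr p (fun ω => Z ω = z) * Lentropy L (condDist p Y (fun ω => Z ω = z)) := by
    intro z
    set pz := pr p (fun ω => Z ω = z) with hpz
    rcases eq_or_lt_of_le (pr_nonneg hp (fun ω => Z ω = z)) with h0 | hpos
    · have hJ0 : ∀ x, J x z = 0 := fun x =>
        le_antisymm (by rw [hJ]; exact (pr_mono hp fun ω h => h.2).trans h0.ge)
          (pr_nonneg hp _)
      simp only [hJ0, zero_mul, Finset.sum_const_zero]
      rw [hpz, ← h0, zero_mul]
    · have hne : pz ≠ 0 := ne_of_gt hpos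
      have hmixid : condDist p Y (fun ω => Z ω = z)
          = fun y => ∑ x, (J x z / pz) * condDist p Y (fun ω => X ω = x) y := by
        funext y
        have h2 : ∀ x, pr p (fun ω => Y ω = y ∧ (X ω = x ∧ Z ω = z))
            = J x z * condDist p Y (fun ω => X ω = x) y := by
          intro x
          rcases eq_or_lt_of_le (pr_nonneg hp (fun ω => X ω = x ∧ Z ω = z)) with hj0 | hjpos
          · have hz : pr p (fun ω => Y ω = y ∧ (X ω = x ∧ Z ω = z)) = 0 :=
              le_antisymm ((pr_mono hp fun ω h => h.2).trans hj0.ge) (pr_nonneg hp _)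
            rw [hz, hJ]
            simp [← hj0]
          · rw [← hMarkov x z hjpos]
            unfold condDist
            rw [hJ]
            field_simp
        have h1 : pr p (fun ω => Y ω = y ∧ Z ω = z)
            = ∑ x, J x z * condDist p Y (fun ω => X ω = x) y := by
          rw [pr_fiber p X (fun ω => Y ω = y ∧ Z ω = z)]
          refine Finset.sum_congr rfl fun x _ => ?_
          rw [← h2 x]
          exact pr_congr p fun ω => by tauto
        show pr p (fun ω => Y ω = y ∧ Z ω = z) / pz = _
        rw [h1, Finset.sum_div]
        exact Finset.sum_congr rfl fun x _ => (mul_div_right_comm _ _ _)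
      rw [hmixid]
      have hmix := lentropy_mix L (fun x => J x z / pz)
        (fun x => div_nonneg (pr_nonneg hp _) hpos.le)
        (fun x => condDist p Y (fun ω => X ω = x))
      have hEq : ∑ x, J x z * H x = pz * ∑ x, (J x z / pz) * H x := by
        rw [Finset.mul_sum]
        refine Finset.sum_congr rfl fun x _ => ?_
        field_simp
      rw [hEq]
      exact mul_le_mul_of_nonneg_left hmix hpos.le
  calc ∑ x, pr p (fun ω => X ω = x) * H x
      = ∑ x, ∑ z, J x z * H x := by
        refine Finset.sum_congr rfl fun x _ => ?_
        rw [← Finset.sum_mul]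
        congr 1
        rw [pr_fiber p Z (fun ω => X ω = x)]
        exact Finset.sum_congr rfl fun z _ => pr_congr p fun ω => by tauto
    _ = ∑ z, ∑ x, J x z * H x := Finset.sum_comm
    _ ≤ ∑ z, pr p (fun ω => Z ω = z) * Lentropy L (condDist p Y (fun ω => Z ω = z)) :=
        Finset.sum_le_sum fun z _ => key z
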